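/- arXiv:2501.10520 — 9 statements merged into one kernel-verified Lean document; each statement's English description precedes it below -/
import Mathlib

section
/- Let g(X) ∈ K[X] be a polynomial of degree r ≥ 2 such that the coefficient of the term of degree r − 1 is zero, and let λ, β ∈ K with λ ≠ 0. Then g(X) = g(λX + β) if and only if β = 0 and there exist s ∈ ℕ and h(X) ∈ K[X] such that λ^s = 1 and g(X) = h(X^s). -/
/-
Writing `g(λX + β) = (g(X + β))(λX)`, the coefficient of `X^(r-1)` on the right is
`λ^(r-1) (g_{r-1} + r β g_r) = λ^(r-1) r β g_r`, so `g = g(λX + β)` forces `β = 0`. Then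
`g(λX) = g` says `λ^k = 1` whenever `g_k ≠ 0`; in particular `λ^r = 1`, so `λ` has a finite order
`s`, every exponent occurring in `g` is a multiple of `s`, and `g` is a polynomial in `X^s`.
-/

open Polynomial

namespace Polynomial

section CommSemiring

variable {R : Type*} [CommSemiring R]

theorem coeff_ne_zero_of_natDegree_eq_succ {p : R[X]} {n : ℕ} (hdeg : p.natDegree = n + 1) :
    p.coeff (n + 1) ≠ 0 := by
  rw [← hdeg, coeff_natDegree, leadingCoeff_ne_zero]
  exact ne_zero_of_natDegree_gt (n := n) (by omega)

theorem comp_C_mul_X_add_C_eq_taylor_comp (p : R[X]) (a b : R) :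
    p.comp (C a * X + C b) = (taylor b p).comp (C a * X) := by
  rw [taylor_apply, comp_assoc, add_comp, X_comp, C_comp]

theorem coeff_taylor_of_natDegree_eq_succ {p : R[X]} {n : ℕ} (hdeg : p.natDegree = n + 1)
    (b : R) : (taylor b p).coeff n = p.coeff n + (n + 1) * p.coeff (n + 1) * b := by
  have hle : (hasseDeriv n p).natDegree ≤ 1 := by
    simpa [hdeg] using natDegree_hasseDeriv_le p n
  rw [taylor_coeff, eq_X_add_C_of_natDegree_le_one hle, eval_add, eval_mul, eval_C, eval_C,
    eval_X, hasseDeriv_coeff, hasseDeriv_coeff, zero_add, Nat.choose_self, add_comm 1 n,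
    Nat.choose_succ_self_right]
  push_cast
  ring

theorem expand_contract_of_dvd {p : ℕ} (hp : p ≠ 0) {f : R[X]}
    (h : ∀ n, f.coeff n ≠ 0 → p ∣ n) : expand R p (contract p f) = f := by
  ext n
  rw [coeff_expand (Nat.pos_of_ne_zero hp), coeff_contract hp]
  split_ifs with hn
  · rw [Nat.div_mul_cancel hn]
  · exact (not_imp_comm.1 (h n) hn).symm

theorem eq_contract_comp_X_pow_orderOf {p : R[X]} {a : R} (ha : IsOfFinOrder a)
    (h : ∀ n, p.coeff n ≠ 0 → a ^ n = 1) :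
    p = (contract (orderOf a) p).comp (X ^ orderOf a) := by
  rw [← expand_eq_comp_X_pow, expand_contract_of_dvd ha.orderOf_pos.ne'
    fun n hn ↦ orderOf_dvd_of_pow_eq_one (h n hn)]

theorem comp_X_pow_comp_C_mul_X {q : R[X]} {a : R} {s : ℕ} (ha : a ^ s = 1) :
    (q.comp (X ^ s)).comp (C a * X) = q.comp (X ^ s) := by
  rw [comp_assoc, X_pow_comp, mul_pow, ← C_pow, ha, C_1, one_mul]

end CommSemiring

section IsDomain

variable {R : Type*} [CommRing R] [IsDomain R]

theorem comp_C_mul_X_eq_self_iff {p : R[X]} {a : R} :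
    p.comp (C a * X) = p ↔ ∀ n, p.coeff n ≠ 0 → a ^ n = 1 := by
  simp only [Polynomial.ext_iff, comp_C_mul_X_coeff]
  refine forall_congr' fun n ↦ ⟨fun h hn ↦ (mul_eq_left₀ hn).1 h, fun h ↦ ?_⟩
  rcases eq_or_ne (p.coeff n) 0 with hn | hn
  · rw [hn, zero_mul]
  · rw [h hn, mul_one]

theorem eq_zero_of_comp_C_mul_X_add_C_eq_self [CharZero R] {p : R[X]} {n : ℕ}
    (hdeg : p.natDegree = n + 1) (hcoeff : p.coeff n = 0) {a b : R} (ha : a ≠ 0)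
    (h : p.comp (C a * X + C b) = p) : b = 0 := by
  have hn := congrArg (coeff · n) h
  simp only [comp_C_mul_X_add_C_eq_taylor_comp, comp_C_mul_X_coeff,
    coeff_taylor_of_natDegree_eq_succ hdeg, hcoeff, zero_add] at hn
  simpa [coeff_ne_zero_of_natDegree_eq_succ hdeg, ha, Nat.cast_add_one_ne_zero] using hn

end IsDomain

end Polynomial

theorem stmt_1_general {K : Type*} [Field K] [CharZero K]
    (g : Polynomial K) (r : ℕ) (hr : 2 ≤ r) (hdeg : g.natDegree = r)
    (hcoeff : g.coeff (r - 1) = 0) (lam beta : K) (hlam : lam ≠ 0) :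
    g = g.comp (Polynomial.C lam * Polynomial.X + Polynomial.C beta) ↔
      beta = 0 ∧ ∃ (s : ℕ) (h : Polynomial K), lam ^ s = 1 ∧
        g = h.comp (Polynomial.X ^ s) := by
  obtain ⟨n, rfl⟩ : ∃ n, r = n + 1 := ⟨r - 1, by omega⟩
  rw [Nat.add_sub_cancel] at hcoeff
  constructor
  · intro h
    obtain rfl := eq_zero_of_comp_C_mul_X_add_C_eq_self hdeg hcoeff hlam h.symm
    rw [C_0, add_zero, eq_comm, comp_C_mul_X_eq_self_iff] at h
    have hfin : IsOfFinOrder lam := isOfFinOrder_iff_pow_eq_one.2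
      ⟨n + 1, n.succ_pos, h _ (coeff_ne_zero_of_natDegree_eq_succ hdeg)⟩
    exact ⟨rfl, _, _, pow_orderOf_eq_one lam, eq_contract_comp_X_pow_orderOf hfin h⟩
  · rintro ⟨rfl, s, q, hs, rfl⟩
    rw [C_0, add_zero, comp_X_pow_comp_C_mul_X hs]

/-- Let `g ∈ K[X]` of degree `r ≥ 2` with vanishing coefficient in degree `r - 1`, and let
`λ, β ∈ K` with `λ ≠ 0`. Then `g(X) = g(λX + β)` iff `β = 0`, `λ` is an `s`-th root of unity
and `g(X) = h(X^s)` for some `h ∈ K[X]` and `s ∈ ℕ`. -/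
theorem stmt_1 {K : Type*} [Field K] [CharZero K] [IsAlgClosed K]
    (g : Polynomial K) (r : ℕ) (hr : 2 ≤ r) (hdeg : g.natDegree = r)
    (hcoeff : g.coeff (r - 1) = 0) (lam beta : K) (hlam : lam ≠ 0) :
    g = g.comp (Polynomial.C lam * Polynomial.X + Polynomial.C beta) ↔
      beta = 0 ∧ ∃ (s : ℕ) (h : Polynomial K), lam ^ s = 1 ∧
        g = h.comp (Polynomial.X ^ s) :=
  stmt_1_general g r hr hdeg hcoeff lam beta hlam
end

section
/- Let D = c·∂/∂X + f(X)·∂/∂Y be a K-derivation of K[X,Y], where c ∈ K \ {0} and f(X) ∈ K[X] has degree n ≥ 1. Then Tame_D(K[X,Y]) is the subgroup of Aut_K(K[X,Y]) generated by the automorphisms ρ with ρ(X) = X and ρ(Y) = βY + h(X), where β ∈ K \ {0} and h(X) ∈ K[X] satisfies c·h'(X) = (1 − β)·f(X). Equivalently, an elementary automorphism of K[X,Y] commutes with D if and only if it has this form. -/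
open MvPolynomial

/-- An elementary automorphism of `K[X_1,…,X_n]`: there are an index `i`, a nonzero scalar `a`
and a polynomial `f` not involving `X i` such that `ρ (X i) = a • X i + f` and `ρ` fixes the
other variables. -/
def IsElementary {K : Type*} [CommSemiring K] {n : ℕ}
    (ρ : MvPolynomial (Fin n) K ≃ₐ[K] MvPolynomial (Fin n) K) : Prop :=
  ∃ (i : Fin n) (a : K) (f : MvPolynomial (Fin n) K), a ≠ 0 ∧
    MvPolynomial.degreeOf i f = 0 ∧
    ρ (X i) = C a * X i + f ∧ ∀ j : Fin n, j ≠ i → ρ (X j) = X j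

/-- `ρ` commutes with the derivation `D`, i.e. `ρ ∘ D = D ∘ ρ`. -/
def CommutesWith {K A : Type*} [CommRing K] [CommRing A] [Algebra K A]
    (ρ : A ≃ₐ[K] A) (D : Derivation K A A) : Prop :=
  ∀ p : A, ρ (D p) = D (ρ p)

/-- The tame isotropy group of `D`: the subgroup of the automorphism group generated by the
elementary automorphisms commuting with `D`. -/
noncomputable def tameIsotropy {K : Type*} [CommRing K] {n : ℕ}
    (D : Derivation K (MvPolynomial (Fin n) K) (MvPolynomial (Fin n) K)) :
    Subgroup (MvPolynomial (Fin n) K ≃ₐ[K] MvPolynomial (Fin n) K) :=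
  Subgroup.closure {ρ | IsElementary ρ ∧ CommutesWith ρ D}

/-- A derivation is simple if the only `D`-stable ideals are `⊥` and `⊤`. -/
def IsSimpleDerivation {K A : Type*} [CommRing K] [CommRing A] [Algebra K A]
    (D : Derivation K A A) : Prop :=
  ∀ I : Ideal A, (∀ x ∈ I, D x ∈ I) → I = ⊥ ∨ I = ⊤

/-- A translation of `K[X_1,…,X_n]`: each variable `X j` is sent to `X j + c j`. -/
def IsTranslation {K : Type*} [CommSemiring K] {n : ℕ}
    (ρ : MvPolynomial (Fin n) K ≃ₐ[K] MvPolynomial (Fin n) K) : Prop :=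
  ∃ c : Fin n → K, ∀ j : Fin n, ρ (X j) = X j + C (c j)

section Aux

variable {K : Type*} [CommRing K]

lemma deriv_aeval_chain {A : Type*} [CommRing A] [Algebra K A]
    (d : Derivation K A A) (x : A) (h : Polynomial K) :
    d (Polynomial.aeval x h) = Polynomial.aeval x (Polynomial.derivative h) * d x := by
  induction h using Polynomial.induction_on with
  | C a => simp
  | add p q hp hq => simp [hp, hq, add_mul]
  | monomial n a ih =>
      simp only [map_mul, Polynomial.aeval_C, Polynomial.aeval_X_pow, Derivation.leibniz,
        Derivation.leibniz_pow, Polynomial.derivative_C_mul, Polynomial.derivative_X_pow,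
        Polynomial.aeval_mul, Polynomial.aeval_natCast, map_pow, Polynomial.aeval_X,
        Derivation.map_algebraMap, smul_zero, mul_zero, add_zero, smul_smul,
        nsmul_eq_mul, smul_eq_mul, map_natCast]
      ring

lemma commutes_of_X {n : ℕ} (ρ : MvPolynomial (Fin n) K ≃ₐ[K] MvPolynomial (Fin n) K)
    (D : Derivation K (MvPolynomial (Fin n) K) (MvPolynomial (Fin n) K))
    (hX : ∀ i, ρ (D (X i)) = D (ρ (X i))) : CommutesWith ρ D := by
  intro p
  induction p using MvPolynomial.induction_on with
  | C a =>
      rw [show (C a : MvPolynomial (Fin n) K) = algebraMap K _ a from rfl,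
        Derivation.map_algebraMap, map_zero, AlgEquiv.commutes, Derivation.map_algebraMap]
  | add p q hp hq => simp [hp, hq]
  | mul_X p i hp =>
      simp only [D.leibniz, smul_eq_mul, map_add, map_mul, hp, hX]

lemma exists_poly_of_degreeOf_eq_zero {i j : Fin 2} (hij : i ≠ j)
    (g : MvPolynomial (Fin 2) K) (hg : degreeOf j g = 0) :
    ∃ h : Polynomial K, g = Polynomial.aeval (X i : MvPolynomial (Fin 2) K) h := by
  refine ⟨∑ m ∈ g.support, Polynomial.C (coeff m g) * Polynomial.X ^ (m i), ?_⟩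
  rw [map_sum]
  conv_lhs => rw [g.as_sum]
  refine Finset.sum_congr rfl fun m hm => ?_
  have hmj : m j = 0 := by
    have h1 := degreeOf_eq_sup j g ▸ hg
    have h2 : m j ≤ 0 := h1 ▸ Finset.le_sup (f := fun m => m j) hm
    omega
  have hm_eq : m = Finsupp.single i (m i) := by
    ext k
    have hk : k = i ∨ k = j := by
      have hki := k.isLt; have hii := i.isLt; have hji := j.isLt
      have hv : k.val = i.val ∨ k.val = j.val := by
        have hne : i.val ≠ j.val := fun h => hij (Fin.ext h)
        omega
      rcases hv with h | h
      · exact Or.inl (Fin.ext h)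
      · exact Or.inr (Fin.ext h)
    rcases hk with rfl | rfl
    · simp
    · simp [Finsupp.single_apply, hij, hmj]
  rw [map_mul, Polynomial.aeval_C, map_pow, Polynomial.aeval_X, MvPolynomial.algebraMap_eq,
    X_pow_eq_monomial, C_mul_monomial, mul_one, ← hm_eq]

lemma degreeOf_aeval_X [Nontrivial K] {i j : Fin 2} (hij : i ≠ j) (h : Polynomial K) :
    degreeOf i (Polynomial.aeval (X j : MvPolynomial (Fin 2) K) h) = 0 := by
  rw [← Nat.le_zero]
  induction h using Polynomial.induction_on with
  | C a => simp [Polynomial.aeval_C, MvPolynomial.algebraMap_eq, degreeOf_C]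
  | add p q hp hq =>
      rw [map_add]
      exact le_trans (degreeOf_add_le _ _ _) (by omega)
  | monomial n a ih =>
      rw [map_mul, Polynomial.aeval_C, map_pow, Polynomial.aeval_X]
      refine le_trans (degreeOf_mul_le _ _ _) ?_
      have h1 : degreeOf i ((algebraMap K (MvPolynomial (Fin 2) K)) a) = 0 := by
        rw [MvPolynomial.algebraMap_eq]; exact degreeOf_C _ _
      have h2 : degreeOf i ((X j : MvPolynomial (Fin 2) K) ^ (n + 1)) = 0 := by
        refine Nat.le_zero.mp (le_trans (degreeOf_pow_le _ _ _) ?_)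
        rw [degreeOf_X, if_neg hij]
        simp
      omega

lemma fin2_cases (i : Fin 2) : i = 0 ∨ i = 1 := by
  have hi := i.isLt
  rcases (by omega : i.val = 0 ∨ i.val = 1) with h | h
  · exact Or.inl (Fin.ext h)
  · exact Or.inr (Fin.ext h)

end Aux

/-- For the derivation `D = c·∂/∂X + f(X)·∂/∂Y` of `K[X,Y]` with `c ≠ 0` and `deg f ≥ 1`,
an elementary automorphism commutes with `D` iff it is of the form
`(X, Y) ↦ (X, βY + h(X))` with `β ≠ 0` and `c·h' = (1 - β)·f`; consequently `Tame_D(K[X,Y])`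
is generated by the automorphisms of this form. -/
theorem stmt_4 {K : Type*} [Field K] [CharZero K] [IsAlgClosed K]
    (c : K) (hc : c ≠ 0) (f : Polynomial K) (hf : 1 ≤ f.natDegree)
    (D : Derivation K (MvPolynomial (Fin 2) K) (MvPolynomial (Fin 2) K))
    (hD : D = (C c : MvPolynomial (Fin 2) K) • pderiv (0 : Fin 2)
        + (Polynomial.aeval (X 0 : MvPolynomial (Fin 2) K) f) • pderiv (1 : Fin 2)) :
    (∀ ρ : MvPolynomial (Fin 2) K ≃ₐ[K] MvPolynomial (Fin 2) K,
      (IsElementary ρ ∧ CommutesWith ρ D) ↔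
        ∃ (β : K) (h : Polynomial K), β ≠ 0 ∧
          Polynomial.C c * Polynomial.derivative h = (1 - Polynomial.C β) * f ∧
          ρ (X 0) = X 0 ∧
          ρ (X 1) = C β * X 1 + Polynomial.aeval (X 0 : MvPolynomial (Fin 2) K) h) ∧
    tameIsotropy D = Subgroup.closure
      {ρ : MvPolynomial (Fin 2) K ≃ₐ[K] MvPolynomial (Fin 2) K |
        ∃ (β : K) (h : Polynomial K), β ≠ 0 ∧
          Polynomial.C c * Polynomial.derivative h = (1 - Polynomial.C β) * f ∧
          ρ (X 0) = X 0 ∧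
          ρ (X 1) = C β * X 1 + Polynomial.aeval (X 0 : MvPolynomial (Fin 2) K) h} := by
  have h01 : (0 : Fin 2) ≠ 1 := by decide
  have h10 : (1 : Fin 2) ≠ 0 := by decide
  set R := MvPolynomial (Fin 2) K with hR
  set F : R := Polynomial.aeval (X 0 : R) f with hF
  have hf0 : f ≠ 0 := fun h => by simp [h] at hf
  have hDp : ∀ p : R, D p = C c * pderiv 0 p + F * pderiv 1 p := by
    intro p
    rw [hD]
    rw [Derivation.add_apply, Derivation.smul_apply, Derivation.smul_apply,
      smul_eq_mul, smul_eq_mul]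
  have hD0 : D (X 0) = C c := by
    rw [hDp, pderiv_X_self, pderiv_X_of_ne h01, mul_one, mul_zero, add_zero]
  have hD1 : D (X 1) = F := by
    rw [hDp, pderiv_X_self, pderiv_X_of_ne h10, mul_zero, zero_add, mul_one]
  set ψ0 : R →ₐ[K] Polynomial K := aeval ![Polynomial.X, 0] with hψ0
  have hψ0X0 : ψ0 (X 0) = Polynomial.X := by rw [hψ0, aeval_X]; rfl
  have hψ0X1 : ψ0 (X 1) = 0 := by rw [hψ0, aeval_X]; rfl
  have hψ0aev : ∀ q : Polynomial K, ψ0 (Polynomial.aeval (X 0 : R) q) = q := fun q => by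
    rw [← Polynomial.aeval_algHom_apply, hψ0X0, Polynomial.aeval_X_left_apply]
  have hψ0F : ψ0 F = f := hψ0aev f
  have hψ0C : ∀ x : K, ψ0 (C x) = Polynomial.C x := fun x => by
    rw [show (C x : R) = algebraMap K R x from rfl, AlgHom.commutes]; rfl
  have hFne : F ≠ 0 := fun h => hf0 (by rw [← hψ0F, h, map_zero])
  have main : ∀ ρ : R ≃ₐ[K] R,
      (IsElementary ρ ∧ CommutesWith ρ D) ↔
        ∃ (β : K) (h : Polynomial K), β ≠ 0 ∧
          Polynomial.C c * Polynomial.derivative h = (1 - Polynomial.C β) * f ∧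
          ρ (X 0) = X 0 ∧
          ρ (X 1) = C β * X 1 + Polynomial.aeval (X 0 : R) h := by
    intro ρ
    have hρC : ∀ x : K, ρ (C x) = C x := fun x => by
      rw [show (C x : R) = algebraMap K R x from rfl, AlgEquiv.commutes]
    have hρaev : ∀ q : Polynomial K, ρ (X 0) = X 0 →
        ρ (Polynomial.aeval (X 0 : R) q) = Polynomial.aeval (X 0 : R) q := fun q hq => by
      rw [← Polynomial.aeval_algHom_apply, hq]
    constructor
    · rintro ⟨⟨i, a, g, ha, hdeg, hρi, hρj⟩, hcomm⟩
      rcases fin2_cases i with rfl | rfl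
      · -- i = 0 : ρ is forced to be the identity
        obtain ⟨h0, rfl⟩ := exists_poly_of_degreeOf_eq_zero h10 g hdeg
        have hρ1 : ρ (X 1) = X 1 := hρj 1 h10
        have E1 : C c = C c * C a
            + F * Polynomial.aeval (X 1 : R) (Polynomial.derivative h0) := by
          have h1 := hcomm (X 0)
          rw [hD0, hρC, hρi, hDp] at h1
          simp only [map_add, Derivation.leibniz, deriv_aeval_chain, pderiv_X_self,
            pderiv_X_of_ne h01, pderiv_X_of_ne h10, pderiv_C, smul_eq_mul, mul_zero, zero_mul,
            mul_one, one_mul, add_zero, zero_add, smul_zero] at h1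
          linear_combination h1
        obtain ⟨x0, hx0⟩ := IsAlgClosed.exists_root f
          (by rw [Polynomial.degree_eq_natDegree hf0]
              exact_mod_cast (by omega : f.natDegree ≠ 0))
        set χ : R →ₐ[K] Polynomial K := aeval ![Polynomial.C x0, Polynomial.X] with hχ
        have hχX0 : χ (X 0) = Polynomial.C x0 := by rw [hχ, aeval_X]; rfl
        have hχX1 : χ (X 1) = Polynomial.X := by rw [hχ, aeval_X]; rfl
        have hχC : ∀ x : K, χ (C x) = Polynomial.C x := fun x => by
          rw [show (C x : R) = algebraMap K R x from rfl, AlgHom.commutes]; rfl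
        have hχaev : ∀ q : Polynomial K, χ (Polynomial.aeval (X 1 : R) q) = q := fun q => by
          rw [← Polynomial.aeval_algHom_apply, hχX1, Polynomial.aeval_X_left_apply]
        have hχF : χ F = 0 := by
          rw [hF, ← Polynomial.aeval_algHom_apply, hχX0,
            show (Polynomial.C x0 : Polynomial K) = algebraMap K (Polynomial K) x0 from rfl,
            Polynomial.aeval_algebraMap_apply]
          have : Polynomial.aeval x0 f = 0 := by
            rw [Polynomial.coe_aeval_eq_eval]; exact hx0
          rw [this, map_zero]
        have ha1 : a = 1 := by
          have h2 := congrArg χ E1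
          rw [map_add, map_mul, map_mul, hχF, zero_mul, add_zero, hχC, hχC,
            ← Polynomial.C_mul] at h2
          have h3 : c = c * a := Polynomial.C_injective h2
          field_simp at h3
          tauto
        subst ha1
        have hFG : F * Polynomial.aeval (X 1 : R) (Polynomial.derivative h0) = 0 := by
          rw [map_one, mul_one] at E1
          exact (left_eq_add.mp E1)
        have hd0 : Polynomial.derivative h0 = 0 := by
          rcases mul_eq_zero.mp hFG with h | h
          · exact absurd h hFne
          · have := congrArg χ h
            rwa [hχaev, map_zero] at this
        obtain ⟨b, hb0⟩ : ∃ b, h0 = Polynomial.C b :=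
          ⟨h0.coeff 0, Polynomial.eq_C_of_derivative_eq_zero hd0⟩
        subst hb0
        have hρ0 : ρ (X 0) = X 0 + C b := by
          rw [hρi, map_one, one_mul, Polynomial.aeval_C]; rfl
        have E2 : Polynomial.aeval ((X 0 : R) + C b) f = F := by
          have h1 := hcomm (X 1)
          rw [hD1, hρ1, hD1] at h1
          calc Polynomial.aeval ((X 0 : R) + C b) f
              = ρ F := by rw [← hρ0, Polynomial.aeval_algHom_apply, ← hF]
            _ = F := h1
        have E3 : Polynomial.aeval (Polynomial.X + Polynomial.C b) f = f := by
          have h1 := congrArg ψ0 E2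
          rwa [hψ0F, ← Polynomial.aeval_algHom_apply, map_add, hψ0X0, hψ0C] at h1
        have hb : b = 0 := by
          by_contra hb
          have heval : ∀ t : K, f.eval (t + b) = f.eval t := by
            intro t
            have h1 := congrArg (Polynomial.eval t) E3
            rwa [← Polynomial.comp_eq_aeval, Polynomial.eval_comp, Polynomial.eval_add,
              Polynomial.eval_X, Polynomial.eval_C] at h1
          have hiter : ∀ m : ℕ, f.eval ((m : K) * b) = f.eval 0 := by
            intro m
            induction m with
            | zero => simp
            | succ k ih =>
                have h1 := heval ((k : K) * b)
                push_cast
                rw [add_mul, one_mul, h1, ih]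
          have hinj : Function.Injective (fun m : ℕ => (m : K) * b) := by
            intro m₁ m₂ h
            exact Nat.cast_injective (mul_right_cancel₀ hb h)
          have hgz : f - Polynomial.C (f.eval 0) = 0 := by
            apply Polynomial.eq_zero_of_infinite_isRoot
            apply (Set.infinite_range_of_injective hinj).mono
            rintro x ⟨m, rfl⟩
            simp only [Set.mem_setOf_eq, Polynomial.IsRoot, Polynomial.eval_sub,
              Polynomial.eval_C]
            rw [hiter m, sub_self]
          have hfc : f = Polynomial.C (f.eval 0) := by
            rw [← sub_eq_zero]; exact hgz
          rw [hfc, Polynomial.natDegree_C] at hf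
          omega
        subst hb
        refine ⟨1, 0, one_ne_zero, by simp, ?_, ?_⟩
        · rw [hρ0]; simp
        · rw [hρ1]; simp
      · -- i = 1
        obtain ⟨h0, rfl⟩ := exists_poly_of_degreeOf_eq_zero h01 g hdeg
        have hρ0 : ρ (X 0) = X 0 := hρj 0 h01
        have hρF : ρ F = F := hρaev f hρ0
        have E : F = C c * Polynomial.aeval (X 0 : R) (Polynomial.derivative h0) + F * C a := by
          have h1 := hcomm (X 1)
          rw [hD1, hρF, hρi, hDp] at h1
          simp only [map_add, Derivation.leibniz, deriv_aeval_chain, pderiv_X_self,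
            pderiv_X_of_ne h01, pderiv_X_of_ne h10, pderiv_C, smul_eq_mul, mul_zero, zero_mul,
            mul_one, one_mul, add_zero, zero_add, smul_zero] at h1
          linear_combination h1
        have E' : f = Polynomial.C c * Polynomial.derivative h0 + f * Polynomial.C a := by
          have h1 := congrArg ψ0 E
          rwa [hψ0F, map_add, map_mul, map_mul, hψ0C, hψ0C, hψ0aev, hψ0F] at h1
        exact ⟨a, h0, ha, by linear_combination -E', hρ0, hρi⟩
    · rintro ⟨β, h, hβ, hch, hρ0, hρ1⟩
      have hρF : ρ F = F := hρaev f hρ0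
      constructor
      · refine ⟨1, β, Polynomial.aeval (X 0 : R) h, hβ, degreeOf_aeval_X h10 h, hρ1, ?_⟩
        intro j hj
        have : j = 0 := by
          rcases fin2_cases j with rfl | rfl
          · rfl
          · exact absurd rfl hj
        rw [this, hρ0]
      · apply commutes_of_X
        intro i
        rcases fin2_cases i with rfl | rfl
        · rw [hD0, hρC, hρ0, hD0]
        · have hch' : C c * Polynomial.aeval (X 0 : R) (Polynomial.derivative h)
              = (1 - C β) * F := by
            have h1 := congrArg (Polynomial.aeval (X 0 : R)) hch
            rw [map_mul, map_mul, map_sub, map_one, Polynomial.aeval_C,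
              Polynomial.aeval_C] at h1
            rw [show ((algebraMap K R) c) = C c from rfl,
              show ((algebraMap K R) β) = C β from rfl] at h1
            exact h1
          rw [hD1, hρF, hρ1, hDp]
          simp only [map_add, Derivation.leibniz, deriv_aeval_chain, pderiv_X_self,
            pderiv_X_of_ne h01, pderiv_X_of_ne h10, pderiv_C, smul_eq_mul, mul_zero, zero_mul,
            mul_one, one_mul, add_zero, zero_add, smul_zero]
          linear_combination -hch'
  refine ⟨main, ?_⟩
  unfold tameIsotropy
  congr 1
  ext ρ
  exact main ρ
end

section
/- Let n ≥ 2 and let D = Σ_{i=1}^n f_i·∂/∂X_i be a K-derivation of K[X_1,…,X_n], with f_i ∈ K[X_1,…,X_n]. If D is a simple derivation, then every elementary automorphism of K[X_1,…,X_n] that commutes with D is a translation; consequently Tame_D(K[X_1,…,X_n]) is generated by translations. -/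
open MvPolynomial

lemma mv_isUnit_eq_C {K : Type*} [Field K] :
    ∀ {n : ℕ} (p : MvPolynomial (Fin n) K), IsUnit p → ∃ c : K, p = C c := by
  intro n
  induction n with
  | zero => intro p _; exact ⟨p.coeff 0, p.eq_C_of_isEmpty⟩
  | succ m ih =>
      intro p hp
      have h1 : IsUnit (MvPolynomial.finSuccEquiv K m p) := hp.map _
      obtain ⟨r, hr, hrp⟩ := Polynomial.isUnit_iff.mp h1
      obtain ⟨c, rfl⟩ := ih r hr
      refine ⟨c, ?_⟩
      have := congrArg (MvPolynomial.finSuccEquiv K m).symm hrp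
      rw [AlgEquiv.symm_apply_apply] at this
      rw [← this]
      have h2 := RingHom.congr_fun (MvPolynomial.finSuccEquiv_comp_C_eq_C (R := K) m) c
      simpa using h2

lemma diff_mem_span {K : Type*} [CommRing K] {n : ℕ}
    (ρ : MvPolynomial (Fin n) K ≃ₐ[K] MvPolynomial (Fin n) K)
    (i : Fin n) (hfix : ∀ j : Fin n, j ≠ i → ρ (X j) = X j)
    (p : MvPolynomial (Fin n) K) :
    ρ p - p ∈ Ideal.span {ρ (X i) - X i} := by
  induction p using MvPolynomial.induction_on with
  | C a =>
      have h : ρ (C a) = C a := by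
        rw [← MvPolynomial.algebraMap_eq]; exact ρ.commutes a
      rw [h, sub_self]; exact Ideal.zero_mem _
  | add p q hp hq =>
      have h : ρ (p + q) - (p + q) = (ρ p - p) + (ρ q - q) := by
        rw [map_add]; ring
      rw [h]; exact Ideal.add_mem _ hp hq
  | mul_X p j hp =>
      have hX : ρ (X j) - X j ∈ Ideal.span ({ρ (X i) - X i} :
          Set (MvPolynomial (Fin n) K)) := by
        by_cases h : j = i
        · subst h; exact Ideal.subset_span rfl
        · rw [hfix j h, sub_self]; exact Ideal.zero_mem _
      have h : ρ (p * X j) - p * X j = (ρ p - p) * X j + ρ p * (ρ (X j) - X j) := by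
        rw [map_mul]; ring
      rw [h]
      exact Ideal.add_mem _ (Ideal.mul_mem_right _ _ hp) (Ideal.mul_mem_left _ _ hX)

lemma elementary_commutes_isTranslation {K : Type*} [Field K] {n : ℕ}
    (D : Derivation K (MvPolynomial (Fin n) K) (MvPolynomial (Fin n) K))
    (hsimple : IsSimpleDerivation D)
    (ρ : MvPolynomial (Fin n) K ≃ₐ[K] MvPolynomial (Fin n) K)
    (hel : IsElementary ρ) (hcomm : CommutesWith ρ D) : IsTranslation ρ := by
  obtain ⟨i, a, f, _, _, _, hfix⟩ := hel
  set g : MvPolynomial (Fin n) K := ρ (X i) - X i with hg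
  have hspan : ∀ p, ρ p - p ∈ Ideal.span {g} := diff_mem_span ρ i hfix
  have hstable : ∀ x ∈ Ideal.span ({g} : Set (MvPolynomial (Fin n) K)),
      D x ∈ Ideal.span {g} := by
    have hDg : g ∣ D g := by
      rw [← Ideal.mem_span_singleton]
      have h : D g = ρ (D (X i)) - D (X i) := by
        rw [hg, map_sub, hcomm (X i)]
      rw [h]; exact hspan _
    intro x hx
    rw [Ideal.mem_span_singleton] at hx ⊢
    obtain ⟨r, rfl⟩ := hx
    obtain ⟨s, hs⟩ := hDg
    refine ⟨D r + s * r, ?_⟩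
    rw [Derivation.leibniz, smul_eq_mul, smul_eq_mul, hs]; ring
  have hc : ∃ c : K, g = C c := by
    rcases hsimple _ hstable with h | h
    · refine ⟨0, ?_⟩
      rw [Ideal.span_singleton_eq_bot] at h
      rw [h, map_zero]
    · rw [Ideal.span_singleton_eq_top] at h
      exact mv_isUnit_eq_C g h
  obtain ⟨c, hcg⟩ := hc
  refine ⟨fun j => if j = i then c else 0, fun j => ?_⟩
  by_cases h : j = i
  · subst h
    have : ρ (X j) = X j + g := by rw [hg]; ring
    rw [this, hcg]; simp
  · rw [hfix j h]; simp [h]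

/-- If `D = Σ f_i·∂/∂X_i` is a simple derivation of `K[X_1,…,X_n]`, `n ≥ 2`, then every
elementary automorphism commuting with `D` is a translation; consequently the tame isotropy
group of `D` is generated by translations. -/
theorem stmt_7 {K : Type*} [Field K] [CharZero K] [IsAlgClosed K]
    (n : ℕ) (hn : 2 ≤ n) (f : Fin n → MvPolynomial (Fin n) K)
    (D : Derivation K (MvPolynomial (Fin n) K) (MvPolynomial (Fin n) K))
    (hD : D = ∑ i : Fin n, f i • pderiv i)
    (hsimple : IsSimpleDerivation D) :
    (∀ ρ : MvPolynomial (Fin n) K ≃ₐ[K] MvPolynomial (Fin n) K,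
      IsElementary ρ → CommutesWith ρ D → IsTranslation ρ) ∧
    ∃ S : Set (MvPolynomial (Fin n) K ≃ₐ[K] MvPolynomial (Fin n) K),
      (∀ ρ ∈ S, IsTranslation ρ) ∧ tameIsotropy D = Subgroup.closure S := by
  refine ⟨fun ρ hel hcomm => elementary_commutes_isTranslation D hsimple ρ hel hcomm,
    {ρ | IsElementary ρ ∧ CommutesWith ρ D},
    fun ρ hρ => elementary_commutes_isTranslation D hsimple ρ hρ.1 hρ.2, rfl⟩
end

section
/- Let D = f·∂/∂X + g·∂/∂Y be a simple K-derivation of K[X,Y] with f, g ∈ K[X,Y]. If g ∈ K[Y] (i.e., g does not involve X), then g ∈ K; similarly, if f ∈ K[X], then f ∈ K. -/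
open MvPolynomial

/-- If `g` only involves the variable `i` (in `Fin 2`) and `D (X i) = g` for a simple
derivation `D`, then `g` is constant. -/
lemma aux_simple {K : Type*} [Field K] [IsAlgClosed K]
    (D : Derivation K (MvPolynomial (Fin 2) K) (MvPolynomial (Fin 2) K))
    (hsimple : IsSimpleDerivation D) (i : Fin 2) (g : MvPolynomial (Fin 2) K)
    (hDXi : D (X i) = g) (hdeg : ∀ k, k ≠ i → MvPolynomial.degreeOf k g = 0) :
    ∃ d : K, g = C d := by
  classical
  -- the univariate polynomial corresponding to g
  set q : Polynomial K :=
    (aeval (fun k : Fin 2 => if k = i then Polynomial.X else 0)) g with hq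
  have hsupp : ∀ m ∈ g.support, ∀ k, k ≠ i → m k = 0 := by
    intro m hm k hk
    have := (degreeOf_le_iff (d := 0)).1 (le_of_eq (hdeg k hk)) m hm
    omega
  -- reconstruct g from q
  have hrec : Polynomial.aeval (X i : MvPolynomial (Fin 2) K) q = g := by
    rw [hq]
    have hcomp : ((Polynomial.aeval (X i : MvPolynomial (Fin 2) K)).comp
        (aeval (fun k : Fin 2 => if k = i then Polynomial.X else 0))) g
        = (aeval (fun k : Fin 2 => if k = i then (X i : MvPolynomial (Fin 2) K) else 0)) g := by
      congr 1
      apply MvPolynomial.algHom_ext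
      intro k
      by_cases h : k = i <;> simp [h]
    simp only [AlgHom.comp_apply] at hcomp
    rw [hcomp]
    -- now show the substitution X i ↦ X i, X k ↦ 0 fixes g
    conv_lhs => rw [g.as_sum]
    rw [map_sum]
    conv_rhs => rw [g.as_sum]
    apply Finset.sum_congr rfl
    intro m hm
    rw [aeval_monomial, monomial_eq]
    congr 1
    apply Finsupp.prod_congr
    intro k hk
    have : k = i := by
      by_contra hki
      exact (Finsupp.mem_support_iff.1 hk) (hsupp m hm k hki)
    simp [this]
  by_cases hdq : q.degree ≤ 0
  · obtain ⟨d, hd⟩ : ∃ d, q = Polynomial.C d := ⟨q.coeff 0, Polynomial.eq_C_of_degree_le_zero hdq⟩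
    refine ⟨d, ?_⟩
    rw [← hrec, hd]
    simp
  · -- q has positive degree; take a root b
    push_neg at hdq
    obtain ⟨b, hb⟩ := IsAlgClosed.exists_root q (fun h => by simp [h] at hdq)
    exfalso
    set I : Ideal (MvPolynomial (Fin 2) K) := Ideal.span {X i - C b} with hI
    -- the substitution X i ↦ b
    set σ : MvPolynomial (Fin 2) K →ₐ[K] MvPolynomial (Fin 2) K :=
      aeval (fun k : Fin 2 => if k = i then (C b : MvPolynomial (Fin 2) K) else X k) with hσ
    have hσg : σ g = 0 := by
      rw [← hrec, ← Polynomial.aeval_algHom_apply]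
      have : σ (X i) = C b := by simp [hσ]
      rw [this]
      have : (C b : MvPolynomial (Fin 2) K) = algebraMap K _ b := rfl
      rw [this, Polynomial.aeval_algebraMap_apply_eq_algebraMap_eval]
      simp [hb.eq_zero]
    have hdiff : ∀ p : MvPolynomial (Fin 2) K, p - σ p ∈ I := by
      intro p
      induction p using MvPolynomial.induction_on with
      | C a => simp [hσ]
      | add p r hp hr =>
        have : p + r - σ (p + r) = (p - σ p) + (r - σ r) := by rw [map_add]; ring
        rw [this]; exact I.add_mem hp hr
      | mul_X p k hp =>
        have : p * X k - σ (p * X k) = (p - σ p) * X k + σ p * (X k - σ (X k)) := by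
          rw [map_mul]; ring
        rw [this]
        refine I.add_mem (I.mul_mem_right _ hp) (I.mul_mem_left _ ?_)
        by_cases h : k = i
        · subst h
          have : σ (X k) = C b := by simp [hσ]
          rw [this]
          exact Ideal.subset_span (by simp)
        · have : σ (X k) = X k := by simp [hσ, h]
          rw [this]; simp
    have hgI : g ∈ I := by
      have := hdiff g
      rwa [hσg, sub_zero] at this
    -- I is D-stable
    have hstable : ∀ x ∈ I, D x ∈ I := by
      intro x hx
      obtain ⟨c, hc⟩ := Ideal.mem_span_singleton'.1 hx
      rw [← hc, Derivation.leibniz]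
      have hDXib : D (X i - C b) = g := by
        rw [map_sub, hDXi]
        have : (C b : MvPolynomial (Fin 2) K) = algebraMap K _ b := rfl
        rw [this, Derivation.map_algebraMap, sub_zero]
      refine I.add_mem ?_ ?_
      · rw [smul_eq_mul, hDXib]; exact I.mul_mem_left _ hgI
      · rw [smul_eq_mul]; exact I.mul_mem_right _ (Ideal.subset_span (by simp))
    rcases hsimple I hstable with h | h
    · -- X i - C b = 0 is impossible
      have hmem : X i - C b ∈ I := Ideal.subset_span (by simp)
      rw [h, Ideal.mem_bot, sub_eq_zero] at hmem
      have := congrArg (constantCoeff) hmem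
      simp at this
      rw [← this, map_zero] at hmem
      exact MvPolynomial.X_ne_zero i hmem
    · have : (1 : MvPolynomial (Fin 2) K) ∈ I := h ▸ Submodule.mem_top
      obtain ⟨c, hc⟩ := Ideal.mem_span_singleton'.1 this
      have := congrArg (eval (fun _ => b)) hc
      simp at this

/-- Let `D = f·∂/∂X + g·∂/∂Y` be a simple derivation of `K[X,Y]`. If `g` does not involve `X`
then `g` is constant; similarly, if `f` does not involve `Y` then `f` is constant. -/

theorem stmt_10 {K : Type*} [Field K] [CharZero K] [IsAlgClosed K]
    (f g : MvPolynomial (Fin 2) K)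
    (D : Derivation K (MvPolynomial (Fin 2) K) (MvPolynomial (Fin 2) K))
    (hD : D = f • pderiv (0 : Fin 2) + g • pderiv (1 : Fin 2))
    (hsimple : IsSimpleDerivation D) :
    (MvPolynomial.degreeOf 0 g = 0 → ∃ d : K, g = C d) ∧
    (MvPolynomial.degreeOf 1 f = 0 → ∃ c : K, f = C c) := by
  have h1 : D (X (1 : Fin 2)) = g := by
    rw [hD]
    simp [pderiv_X_self, pderiv_X_of_ne (show (1 : Fin 2) ≠ 0 by decide)]
  have h0 : D (X (0 : Fin 2)) = f := by
    rw [hD]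
    simp [pderiv_X_self, pderiv_X_of_ne (show (0 : Fin 2) ≠ 1 by decide)]
  constructor
  · intro hg
    refine aux_simple D hsimple 1 g h1 ?_
    intro k hk
    fin_cases k
    · exact hg
    · simp at hk
  · intro hf
    refine aux_simple D hsimple 0 f h0 ?_
    intro k hk
    fin_cases k
    · simp at hk
    · exact hf
end

section
/- Let D = f·∂/∂X + g·∂/∂Y be a simple K-derivation of K[X,Y] with f, g ∈ K[X,Y]. If g ∈ K[X] \ K (i.e., g involves only X and is nonconstant), then f ∉ K; analogously, if f ∈ K[Y] \ K, then g ∉ K. -/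
open MvPolynomial

-- units of K[X,Y] are constants
lemma mv2_isUnit_eq_C {K : Type*} [Field K] (p : MvPolynomial (Fin 2) K)
    (h : IsUnit p) : ∃ k : K, p = C k := by
  have h1 : IsUnit (MvPolynomial.finSuccEquiv K 1 p) := h.map _
  obtain ⟨r, hr, hrC⟩ := Polynomial.isUnit_iff.1 h1
  have h0 : IsUnit (MvPolynomial.finSuccEquiv K 0 r) := hr.map _
  obtain ⟨s, hs, hsC⟩ := Polynomial.isUnit_iff.1 h0
  obtain ⟨k, rfl⟩ := (MvPolynomial.C_surjective (Fin 0)) s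
  refine ⟨k, ?_⟩
  have hr' : r = C k := by
    have := congrArg (MvPolynomial.finSuccEquiv K 0).symm hsC
    rw [AlgEquiv.symm_apply_apply] at this
    rw [← this]
    exact RingHom.congr_fun (MvPolynomial.finSuccEquiv_comp_C_eq_C 0) k
  have := congrArg (MvPolynomial.finSuccEquiv K 1).symm hrC
  rw [AlgEquiv.symm_apply_apply] at this
  rw [← this, hr']
  simpa using RingHom.congr_fun (MvPolynomial.finSuccEquiv_comp_C_eq_C 1) k

lemma aux_contra {K : Type*} [Field K] [CharZero K]
    (u v : Fin 2) (huv : u ≠ v) (b : MvPolynomial (Fin 2) K) (c : K)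
    (hb : MvPolynomial.degreeOf v b = 0) (hbne : ¬ ∃ k : K, b = C k)
    (D : Derivation K (MvPolynomial (Fin 2) K) (MvPolynomial (Fin 2) K))
    (hDapp : ∀ p, D p = C c * pderiv u p + b * pderiv v p)
    (hsimple : IsSimpleDerivation D) : False := by
  classical
  have hsupp : ∀ m ∈ b.support, m v = 0 := by
    intro m hm
    exact Nat.le_zero.1 (MvPolynomial.degreeOf_le_iff.1 hb.le m hm)
  -- antiderivative of b w.r.t. u
  set G : MvPolynomial (Fin 2) K :=
    ∑ m ∈ b.support, monomial (m + Finsupp.single u 1) (((m u : K) + 1)⁻¹ * b.coeff m) with hG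
  have hGu : pderiv u G = b := by
    rw [hG, map_sum]
    conv_rhs => rw [MvPolynomial.as_sum b]
    refine Finset.sum_congr rfl fun m hm => ?_
    rw [pderiv_monomial]
    simp only [Finsupp.add_apply, Finsupp.single_eq_same, add_tsub_cancel_right,
      Nat.cast_add, Nat.cast_one]
    rw [mul_comm, ← mul_assoc, mul_inv_cancel₀ (Nat.cast_add_one_ne_zero (m u)), one_mul]
  have hGv : pderiv v G = 0 := by
    rw [hG, map_sum]
    refine Finset.sum_eq_zero fun m hm => ?_
    rw [pderiv_monomial]
    have h1 : (m + Finsupp.single u 1 : Fin 2 →₀ ℕ) v = 0 := by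
      rw [Finsupp.add_apply, Finsupp.single_apply, if_neg huv, hsupp m hm]
      rfl
    rw [h1]
    simp
  set p : MvPolynomial (Fin 2) K := C c * X v - G with hp
  have hpu : pderiv u p = -b := by
    rw [hp, map_sub, Derivation.leibniz, pderiv_X, Pi.single_eq_of_ne (Ne.symm huv), pderiv_C]
    simp [hGu]
  have hpv : pderiv v p = C c := by
    rw [hp, map_sub, Derivation.leibniz, pderiv_X, Pi.single_eq_same, pderiv_C]
    simp [hGv]
  have hDp : D p = 0 := by
    rw [hDapp, hpu, hpv]
    ring
  have hpne : ∀ k : K, p ≠ C k := by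
    intro k hk
    apply hbne
    refine ⟨0, ?_⟩
    have : pderiv u p = 0 := by rw [hk, pderiv_C]
    rw [hpu, neg_eq_zero] at this
    rw [this, map_zero]
  -- the stable ideal
  have := hsimple (Ideal.span {p}) ?_
  · rcases this with h | h
    · have : p ∈ Ideal.span {p} := Ideal.subset_span rfl
      rw [h, Ideal.mem_bot] at this
      exact hpne 0 (by rw [this, map_zero])
    · obtain ⟨k, hk⟩ := mv2_isUnit_eq_C p (Ideal.span_singleton_eq_top.1 h)
      exact hpne k hk
  · intro x hx
    obtain ⟨q, rfl⟩ := Ideal.mem_span_singleton.1 hx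
    rw [Derivation.leibniz, hDp, smul_zero, add_zero, smul_eq_mul]
    exact Ideal.mem_span_singleton.2 ⟨D q, rfl⟩

/-- Let `D = f·∂/∂X + g·∂/∂Y` be a simple derivation of `K[X,Y]`. If `g ∈ K[X] \ K` then
`f ∉ K`; analogously, if `f ∈ K[Y] \ K` then `g ∉ K`. -/
theorem stmt_11 {K : Type*} [Field K] [CharZero K] [IsAlgClosed K]
    (f g : MvPolynomial (Fin 2) K)
    (D : Derivation K (MvPolynomial (Fin 2) K) (MvPolynomial (Fin 2) K))
    (hD : D = f • pderiv (0 : Fin 2) + g • pderiv (1 : Fin 2))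
    (hsimple : IsSimpleDerivation D) :
    (MvPolynomial.degreeOf 1 g = 0 → (¬ ∃ d : K, g = C d) → ¬ ∃ c : K, f = C c) ∧
    (MvPolynomial.degreeOf 0 f = 0 → (¬ ∃ c : K, f = C c) → ¬ ∃ d : K, g = C d) := by
  have hDapp : ∀ p, D p = f * pderiv 0 p + g * pderiv 1 p := by
    intro p
    rw [hD]
    simp [smul_eq_mul]
  constructor
  · rintro hg hgne ⟨c, rfl⟩
    exact aux_contra 0 1 (by decide) g c hg hgne D
      (fun p => by rw [hDapp]) hsimple
  · rintro hf hfne ⟨d, rfl⟩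
    exact aux_contra 1 0 (by decide) f d hf hfne D
      (fun p => by rw [hDapp]; ring) hsimple
end

section
/- Let D = f·∂/∂X + g·∂/∂Y be a simple K-derivation of K[X,Y] with f, g ∈ K[X,Y]. Then deg_X f + deg_X g ≥ 1 and deg_Y f + deg_Y g ≥ 1; equivalently, at least one of f, g has positive degree in X, and at least one of f, g has positive degree in Y. -/
open MvPolynomial

section Helpers

variable {K : Type*} [Field K] [CharZero K] [IsAlgClosed K]

private lemma mZero {q : MvPolynomial (Fin 2) K} {j : Fin 2} (hq : degreeOf j q = 0) :
    ∀ m ∈ q.support, m j = 0 := by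
  intro m hm
  have := degreeOf_le_iff.mp hq.le m hm
  omega

private lemma pderivZero {q : MvPolynomial (Fin 2) K} {j : Fin 2} (hq : degreeOf j q = 0) :
    pderiv j q = 0 := by
  apply pderiv_eq_zero_of_notMem_vars
  rw [mem_vars]
  rintro ⟨m, hm, hj⟩
  exact (Finsupp.mem_support_iff.mp hj) (mZero hq m hm)

private lemma fin2cases (i j k : Fin 2) (hij : i ≠ j) : k = i ∨ k = j := by
  revert hij; revert i j k; decide

private lemma antideriv (i : Fin 2) (p : MvPolynomial (Fin 2) K) :
    ∃ h : MvPolynomial (Fin 2) K, pderiv i h = p ∧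
      ∀ m ∈ h.support, ∃ m' ∈ p.support, m = m' + Finsupp.single i 1 := by
  refine ⟨∑ m ∈ p.support, monomial (m + Finsupp.single i 1) (coeff m p * ((m i : K) + 1)⁻¹),
    ?_, ?_⟩
  · rw [map_sum]
    conv_rhs => rw [p.as_sum]
    refine Finset.sum_congr rfl fun m hm => ?_
    rw [pderiv_monomial, add_tsub_cancel_right]
    congr 1
    have h1 : ((m i : K) + 1) ≠ 0 := Nat.cast_add_one_ne_zero _
    rw [Finsupp.add_apply, Finsupp.single_eq_same]
    push_cast
    field_simp
  · intro m hm
    rw [MvPolynomial.mem_support_iff] at hm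
    by_contra hcon
    push_neg at hcon
    apply hm
    rw [coeff_sum]
    refine Finset.sum_eq_zero fun m' hm' => ?_
    rw [coeff_monomial, if_neg]
    exact fun e => hcon m' hm' e.symm

private lemma not_simple_of (D : Derivation K (MvPolynomial (Fin 2) K) (MvPolynomial (Fin 2) K))
    (u : MvPolynomial (Fin 2) K) (hu0 : u ≠ 0) (huu : ¬ IsUnit u)
    (hstab : D u ∈ Ideal.span {u}) : ¬ IsSimpleDerivation D := by
  intro hs
  have hst : ∀ x ∈ Ideal.span {u}, D x ∈ Ideal.span {u} := by
    intro x hx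
    rw [Ideal.mem_span_singleton'] at hx
    obtain ⟨v, rfl⟩ := hx
    rw [Derivation.leibniz]
    refine Ideal.add_mem _ ?_ ?_
    · rw [smul_eq_mul]; exact Ideal.mul_mem_left _ _ hstab
    · rw [smul_eq_mul]
      exact Ideal.mul_mem_right _ _ (Ideal.mem_span_singleton_self u)
  rcases hs (Ideal.span {u}) hst with h | h
  · exact hu0 (by simpa [Ideal.span_singleton_eq_bot] using h)
  · exact huu (Ideal.span_singleton_eq_top.mp h)

private lemma key (i j : Fin 2) (hij : i ≠ j) (p q : MvPolynomial (Fin 2) K)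
    (hp : degreeOf j p = 0) (hq : degreeOf j q = 0)
    (D : Derivation K (MvPolynomial (Fin 2) K) (MvPolynomial (Fin 2) K))
    (hD : D = p • pderiv j + q • pderiv i) :
    ¬ IsSimpleDerivation D := by
  by_cases hqi : degreeOf i q = 0
  · -- q is a constant
    have hqC : q = C (coeff 0 q) := by
      ext m
      rw [coeff_C]
      split_ifs with h
      · rw [h]
      · rw [← notMem_support_iff]
        intro hm
        apply h
        ext k
        rcases fin2cases i j k hij with rfl | rfl
        · simpa using (mZero hqi m hm).symm
        · simpa using (mZero hq m hm).symm
    by_cases hc : coeff 0 q = 0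
    · -- q = 0, use the ideal (X i)
      have hq0 : q = 0 := by rw [hqC, hc, map_zero]
      refine not_simple_of D (X i) (X_ne_zero i) ?_ ?_
      · intro hu
        have h2 := hu.map (eval (fun _ => (0 : K)))
        simp at h2
      · have : D (X i) = 0 := by
          rw [hD]
          simp only [Derivation.add_apply, Derivation.smul_apply, hq0, zero_smul, add_zero]
          rw [pderiv_X_of_ne hij, smul_zero]
        rw [this]; exact Ideal.zero_mem _
    · -- q = C c, c ≠ 0 : use c • X j - antiderivative of p
      set c := coeff 0 q with hcdef
      obtain ⟨h, hh1, hh2⟩ := antideriv i p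
      have hhj : ∀ m ∈ h.support, m j = 0 := by
        intro m hm
        obtain ⟨m', hm', rfl⟩ := hh2 m hm
        rw [Finsupp.add_apply, Finsupp.single_apply, if_neg hij]
        simp [mZero hp m' hm']
      have hhi : ∀ m ∈ h.support, m i ≠ 0 := by
        intro m hm
        obtain ⟨m', hm', rfl⟩ := hh2 m hm
        simp [Finsupp.add_apply]
      set u : MvPolynomial (Fin 2) K := C c * X j - h with hu
      have hpdj : pderiv j h = 0 := by
        apply pderiv_eq_zero_of_notMem_vars
        rw [mem_vars]
        rintro ⟨m, hm, hjj⟩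
        exact (Finsupp.mem_support_iff.mp hjj) (hhj m hm)
      have hch : constantCoeff h = 0 := by
        rw [constantCoeff_eq, ← notMem_support_iff] at *
        intro hm
        exact hhi 0 hm rfl
      refine not_simple_of D u ?_ ?_ ?_
      · -- u ≠ 0 : coefficient of X j is c ≠ 0
        intro h0
        have : coeff (Finsupp.single j 1) u = 0 := by rw [h0]; simp
        rw [hu] at this
        simp only [coeff_sub, coeff_C_mul, coeff_X] at this
        have hch2 : coeff (Finsupp.single j 1) h = 0 := by
          rw [← notMem_support_iff]
          intro hm
          apply hhi _ hm
          rw [Finsupp.single_apply, if_neg hij.symm]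
        rw [hch2] at this
        simp at this
        exact hc this
      · -- u is not a unit : evaluates to 0 at the origin
        intro hunit
        have h2 := hunit.map (eval (fun _ => (0 : K)))
        rw [hu] at h2
        simp only [map_sub, map_mul, eval_C, eval_X] at h2
        rw [show (fun _ => (0:K)) = (0 : Fin 2 → K) from rfl, eval_zero, hch] at h2
        simp at h2
      · have h1 : pderiv j u = C c := by
          rw [hu, map_sub, hpdj, sub_zero, Derivation.leibniz]
          simp [pderiv_C, pderiv_X_self, smul_eq_mul]
        have h2 : pderiv i u = -p := by
          rw [hu, map_sub, hh1, Derivation.leibniz]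
          simp [pderiv_C, pderiv_X_of_ne hij.symm, smul_eq_mul]
        have : D u = 0 := by
          rw [hD]
          simp only [Derivation.add_apply, Derivation.smul_apply, h1, h2, smul_eq_mul, hqC]
          ring
        rw [this]; exact Ideal.zero_mem _
  · -- q genuinely involves X i: find a root
    set ψ : Polynomial K →ₐ[K] MvPolynomial (Fin 2) K := Polynomial.aeval (X i) with hψ
    set Q : Polynomial K := ∑ m ∈ q.support, Polynomial.C (coeff m q) * Polynomial.X ^ (m i)
      with hQ
    have hψQ : ψ Q = q := by
      rw [hQ, map_sum]
      conv_rhs => rw [q.as_sum]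
      refine Finset.sum_congr rfl fun m hm => ?_
      rw [map_mul, map_pow, Polynomial.aeval_C, Polynomial.aeval_X]
      have hm' : m = Finsupp.single i (m i) := by
        ext k
        rcases fin2cases i j k hij with rfl | rfl
        · simp
        · rw [Finsupp.single_apply, if_neg hij]
          exact mZero hq m hm
      rw [show (algebraMap K (MvPolynomial (Fin 2) K)) = C from rfl]
      rw [X_pow_eq_monomial, C_mul_monomial, mul_one]
      exact congrArg (fun s => monomial s (coeff m q)) hm'.symm
    have hQdeg : Q.degree ≠ 0 := by
      intro hdeg
      have := Polynomial.eq_C_of_degree_le_zero hdeg.le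
      apply hqi
      rw [← hψQ, this, Polynomial.aeval_C]
      rw [show (algebraMap K (MvPolynomial (Fin 2) K)) = C from rfl]
      exact degreeOf_C _ _
    obtain ⟨z, hz⟩ := IsAlgClosed.exists_root Q hQdeg
    have hdvd : (Polynomial.X - Polynomial.C z) ∣ Q := Polynomial.dvd_iff_isRoot.mpr hz
    set u : MvPolynomial (Fin 2) K := X i - C z with hu
    have hψz : ψ (Polynomial.X - Polynomial.C z) = u := by
      rw [map_sub, Polynomial.aeval_X, Polynomial.aeval_C]
      rfl
    refine not_simple_of D u ?_ ?_ ?_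
    · intro h0
      have := congrArg (eval (fun _ => z + 1)) h0
      rw [hu] at this
      simp at this
    · intro hunit
      have h2 := hunit.map (eval (fun _ => z))
      rw [hu] at h2
      simp at h2
    · have hDu : D u = q := by
        rw [hD, hu]
        simp only [Derivation.add_apply, Derivation.smul_apply, map_sub]
        rw [pderiv_X_self, pderiv_X_of_ne hij, pderiv_C, pderiv_C]
        simp [smul_eq_mul]
      rw [hDu, ← hψQ, ← hψz]
      exact Ideal.mem_span_singleton.mpr (map_dvd ψ hdvd)

end Helpers

/-- Let `D = f·∂/∂X + g·∂/∂Y` be a simple derivation of `K[X,Y]`. Then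
`deg_X f + deg_X g ≥ 1` and `deg_Y f + deg_Y g ≥ 1`. -/
theorem stmt_12 {K : Type*} [Field K] [CharZero K] [IsAlgClosed K]
    (f g : MvPolynomial (Fin 2) K)
    (D : Derivation K (MvPolynomial (Fin 2) K) (MvPolynomial (Fin 2) K))
    (hD : D = f • pderiv (0 : Fin 2) + g • pderiv (1 : Fin 2))
    (hsimple : IsSimpleDerivation D) :
    1 ≤ MvPolynomial.degreeOf 0 f + MvPolynomial.degreeOf 0 g ∧
    1 ≤ MvPolynomial.degreeOf 1 f + MvPolynomial.degreeOf 1 g := by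
  constructor
  · by_contra hcon
    push_neg at hcon
    rw [Nat.lt_one_iff, Nat.add_eq_zero] at hcon
    exact key 1 0 (by decide) f g hcon.1 hcon.2 D hD hsimple
  · by_contra hcon
    push_neg at hcon
    rw [Nat.lt_one_iff, Nat.add_eq_zero] at hcon
    exact key 0 1 (by decide) g f hcon.2 hcon.1 D (by rw [hD, add_comm]) hsimple
end

section
/- Let D = ∂/∂X + Σ_{i=1}^n (a_i(X)·Y_i + b_i(X))·∂/∂Y_i be a Shamsuddin derivation of K[X, Y_1,…,Y_n] with a_i(X), b_i(X) ∈ K[X], n ≥ 1. If D is simple, then Tame_D(K[X, Y_1,…,Y_n]) = {id}; i.e., the only elementary automorphism of K[X, Y_1,…,Y_n] commuting with D is the identity. -/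
/-!
A Darboux element `w` (`D w ∈ (w)`) of a simple derivation generates a `D`-stable principal
ideal, so it is zero or a unit, hence a constant in a polynomial ring over a field. If an
elementary `ρ : Z ↦ α Z + f` commutes with `D`, and `D Z = u Z + v` with `u, v` fixed by `ρ`,
then `D f = u f + (1 - α) v`. For `α ≠ 1` this makes `Z - f / (1 - α)` a nonconstant Darboux
element; so `α = 1`, and `f` is a Darboux element, i.e. a constant `c` with `u c = 0`. For
`Z = Y_k` we have `u = a_k ≠ 0`, so `c = 0`; for `Z = X` the translation `X ↦ X + c` is ruled out
by its action on `D Y_1`.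
-/

open MvPolynomial

section Darboux

variable {K A : Type*} [CommRing K] [CommRing A] [Algebra K A] {D : Derivation K A A}

theorem IsSimpleDerivation.eq_zero_or_isUnit_of_apply_eq_mul (hD : IsSimpleDerivation D)
    {w u : A} (h : D w = u * w) : w = 0 ∨ IsUnit w := by
  have hstable : ∀ x ∈ Ideal.span {w}, D x ∈ Ideal.span {w} := by
    intro x hx
    obtain ⟨g, rfl⟩ := Ideal.mem_span_singleton'.mp hx
    rw [D.leibniz, h, smul_eq_mul, smul_eq_mul]
    exact Ideal.mem_span_singleton'.mpr ⟨g * u + D g, by ring⟩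
  exact (hD _ hstable).imp Ideal.span_singleton_eq_bot.mp Ideal.span_singleton_eq_top.mp

end Darboux

namespace MvPolynomial

variable {K σ : Type*} [Field K]

theorem X_sub_ne_C {i : σ} {g : MvPolynomial σ K} (hg : degreeOf i g = 0) (c : K) :
    X i - g ≠ C c := by
  intro h
  have hle : degreeOf i (X i : MvPolynomial σ K) ≤ 0 := by
    rw [sub_eq_iff_eq_add.mp h]
    exact (degreeOf_add_le _ _ _).trans (by simp [hg, degreeOf_C])
  simp at hle

theorem degreeOf_aeval_X_of_ne {i s : σ} (h : s ≠ i) (p : Polynomial K) :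
    degreeOf s (Polynomial.aeval (X i : MvPolynomial σ K) p) = 0 := by
  induction p using Polynomial.induction_on' with
  | add p q hp hq =>
    rw [map_add]
    exact Nat.le_zero.mp ((degreeOf_add_le _ _ _).trans (by simp [hp, hq]))
  | monomial k c =>
    rw [Polynomial.aeval_monomial, algebraMap_eq]
    exact Nat.le_zero.mp ((degreeOf_C_mul_le _ _ _).trans (degreeOf_X_pow_of_ne k h).le)

theorem aeval_X_injective (i : σ) :
    Function.Injective (Polynomial.aeval (R := K) (X i : MvPolynomial σ K)) :=
  transcendental_iff_injective.mp (transcendental_X K i)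

theorem aeval_X_add_C (i : σ) (c : K) (p : Polynomial K) :
    Polynomial.aeval (X i + C c : MvPolynomial σ K) p
      = Polynomial.aeval (X i : MvPolynomial σ K) (p.comp (Polynomial.X + Polynomial.C c)) := by
  simp [Polynomial.aeval_comp, algebraMap_eq]

theorem pderiv_aeval_X_of_ne {i s : σ} (h : i ≠ s) (p : Polynomial K) :
    pderiv s (Polynomial.aeval (X i : MvPolynomial σ K) p) = 0 := by
  rw [Derivation.map_aeval, pderiv_X_of_ne h, smul_zero]

theorem eq_and_eq_of_mul_X_add_eq {s : σ} {A₁ B₁ A₂ B₂ : MvPolynomial σ K}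
    (hA₁ : pderiv s A₁ = 0) (hB₁ : pderiv s B₁ = 0) (hA₂ : pderiv s A₂ = 0)
    (hB₂ : pderiv s B₂ = 0) (h : A₁ * X s + B₁ = A₂ * X s + B₂) : A₁ = A₂ ∧ B₁ = B₂ := by
  have hA : A₁ = A₂ := by
    simpa [(pderiv s).leibniz, hA₁, hA₂, hB₁, hB₂] using congrArg (pderiv s) h
  exact ⟨hA, add_left_cancel (hA ▸ h)⟩

theorem algEquiv_eq_one_of_apply_X {ρ : MvPolynomial σ K ≃ₐ[K] MvPolynomial σ K}
    (h : ∀ t, ρ (X t) = X t) : ρ = 1 :=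
  AlgEquiv.coe_toAlgHom_injective (algHom_ext h)

end MvPolynomial

theorem Derivation.finset_sum_apply {R A M ι : Type*} [CommSemiring R] [CommSemiring A]
    [AddCommMonoid M] [Algebra R A] [Module A M] [Module R M] (s : Finset ι)
    (d : ι → Derivation R A M) (x : A) : (∑ i ∈ s, d i) x = ∑ i ∈ s, d i x :=
  (congrFun (map_sum Derivation.coeFnAddMonoidHom d s) x).trans (Finset.sum_apply _ _ _)

namespace Polynomial

variable {R : Type*} [CommRing R] [IsDomain R] [CharZero R]

theorem eq_C_of_comp_X_add_C_eq_self {p : R[X]} {c : R} (hc : c ≠ 0)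
    (h : p.comp (X + C c) = p) : p = C (p.eval 0) := by
  have hperiodic : ∀ x, p.eval (x + c) = p.eval x := fun x => by
    conv_rhs => rw [← h]
    simp
  have hmultiples : ∀ k : ℕ, p.eval (k * c) = p.eval 0 := by
    intro k
    induction k with
    | zero => simp
    | succ k ih => rw [Nat.cast_succ, add_one_mul, hperiodic, ih]
  refine eq_of_infinite_eval_eq _ _ (Set.Infinite.mono ?_ (Set.infinite_range_of_injective
    (f := fun k : ℕ => (k : R) * c) fun k l hkl => by exact_mod_cast mul_right_cancel₀ hc hkl))
  rintro _ ⟨k, rfl⟩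
  simp [hmultiples k]

theorem exists_derivative_eq {K : Type*} [Field K] [CharZero K] (q : K[X]) :
    ∃ P, derivative P = q := by
  induction q using Polynomial.induction_on' with
  | add p q hp hq =>
    obtain ⟨P, rfl⟩ := hp
    obtain ⟨Q, rfl⟩ := hq
    exact ⟨P + Q, map_add _ _ _⟩
  | monomial k c =>
    refine ⟨monomial (k + 1) (c / (k + 1)), ?_⟩
    rw [derivative_monomial, Nat.add_sub_cancel, Nat.cast_succ,
      div_mul_cancel₀ _ k.cast_add_one_ne_zero]

end Polynomial

section SimpleDerivation

variable {K σ : Type*} [Field K] {D : Derivation K (MvPolynomial σ K) (MvPolynomial σ K)}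

theorem IsSimpleDerivation.exists_eq_C_of_apply_eq_mul (hD : IsSimpleDerivation D)
    {w u : MvPolynomial σ K} (h : D w = u * w) : ∃ c, w = C c := by
  rcases hD.eq_zero_or_isUnit_of_apply_eq_mul h with rfl | hw
  · exact ⟨0, C_0.symm⟩
  · obtain ⟨c, -, rfl⟩ := isUnit_iff_eq_C_of_isReduced.mp hw
    exact ⟨c, rfl⟩

theorem IsSimpleDerivation.apply_X_sub_ne_mul (hD : IsSimpleDerivation D) {i : σ}
    {g : MvPolynomial σ K} (hg : degreeOf i g = 0) (u : MvPolynomial σ K) :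
    D (X i - g) ≠ u * (X i - g) := fun h =>
  let ⟨c, hc⟩ := hD.exists_eq_C_of_apply_eq_mul h
  X_sub_ne_C hg c hc

theorem Derivation.map_C_mul (c : K) (p : MvPolynomial σ K) : D (C c * p) = C c * D p := by
  rw [C_mul', C_mul', D.map_smul]

theorem IsSimpleDerivation.exists_apply_X_eq_X_add_C_of_commutes (hD : IsSimpleDerivation D)
    {ρ : MvPolynomial σ K ≃ₐ[K] MvPolynomial σ K} (hcomm : CommutesWith ρ D) {i : σ} {α : K}
    {f : MvPolynomial σ K} (hf : degreeOf i f = 0) (hρ : ρ (X i) = C α * X i + f)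
    {u v : MvPolynomial σ K} (hDX : D (X i) = u * X i + v) (hu : ρ u = u) (hv : ρ v = v) :
    ∃ c, ρ (X i) = X i + C c ∧ u * C c = 0 := by
  have hDf : D f = u * f + C (1 - α) * v := by
    have h := hcomm (X i)
    rw [hDX, map_add, map_mul, hu, hv, hρ, map_add, D.map_C_mul, hDX] at h
    rw [C_sub, C_1]
    linear_combination -h
  obtain rfl : α = 1 := by
    by_contra hα
    have hα' : C (1 - α) * C (1 - α)⁻¹ = (1 : MvPolynomial σ K) := by
      rw [← C_mul, mul_inv_cancel₀ (sub_ne_zero.mpr (Ne.symm hα)), C_1]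
    refine hD.apply_X_sub_ne_mul (i := i) (g := C (1 - α)⁻¹ * f) ?_ u ?_
    · exact Nat.le_zero.mp ((degreeOf_C_mul_le _ _ _).trans hf.le)
    · rw [map_sub, hDX, D.map_C_mul, hDf]
      linear_combination -v * hα'
  rw [sub_self, C_0, zero_mul, add_zero] at hDf
  obtain ⟨c, rfl⟩ := hD.exists_eq_C_of_apply_eq_mul hDf
  refine ⟨c, by rw [hρ, C_1, one_mul], ?_⟩
  rw [← hDf, derivation_C]

end SimpleDerivation

section Shamsuddin

/-- `X 0` plays the role of `X` and `X i.succ` that of `Y_{i+1}`. -/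
noncomputable def shamsuddin {K : Type*} [CommRing K] {n : ℕ} (a b : Fin n → Polynomial K) :
    Derivation K (MvPolynomial (Fin (n + 1)) K) (MvPolynomial (Fin (n + 1)) K) :=
  pderiv (0 : Fin (n + 1)) + ∑ i : Fin n,
    (Polynomial.aeval (X 0 : MvPolynomial (Fin (n + 1)) K) (a i) * X i.succ
      + Polynomial.aeval (X 0 : MvPolynomial (Fin (n + 1)) K) (b i)) • pderiv i.succ

variable {K : Type*} [Field K] {n : ℕ} {a b : Fin n → Polynomial K}

theorem shamsuddin_apply_X_zero : shamsuddin a b (X 0) = 1 := by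
  simp [shamsuddin, Derivation.finset_sum_apply, pderiv_X_of_ne (Fin.succ_ne_zero _).symm]

theorem shamsuddin_apply_X_succ (j : Fin n) :
    shamsuddin a b (X j.succ) = Polynomial.aeval (X 0 : MvPolynomial (Fin (n + 1)) K) (a j)
      * X j.succ + Polynomial.aeval (X 0 : MvPolynomial (Fin (n + 1)) K) (b j) := by
  simp [shamsuddin, Derivation.finset_sum_apply, pderiv_X, Pi.single_apply]

/-- If `a k = 0` then `D (Y_k - P(X)) = 0` for an antiderivative `P` of `b k`. -/
theorem IsSimpleDerivation.shamsuddin_linearCoeff_ne_zero [CharZero K]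
    (hs : IsSimpleDerivation (shamsuddin a b)) (k : Fin n) : a k ≠ 0 := by
  intro hak
  obtain ⟨P, hP⟩ := Polynomial.exists_derivative_eq (b k)
  refine hs.apply_X_sub_ne_mul (degreeOf_aeval_X_of_ne (Fin.succ_ne_zero k) P) 0 ?_
  rw [map_sub, shamsuddin_apply_X_succ, Derivation.map_aeval, hP, shamsuddin_apply_X_zero, hak]
  simp

/-- A translation `X ↦ X + c` fixing `Y_j` and commuting with `D` makes `a j` and `b j`
`c`-periodic, hence constants `λ ≠ 0` and `μ`; then `Y_j + μ / λ` is a Darboux element. -/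
theorem IsSimpleDerivation.shamsuddin_not_commutes_translation [CharZero K]
    (hs : IsSimpleDerivation (shamsuddin a b)) (j : Fin n) {c : K} (hc : c ≠ 0)
    {ρ : MvPolynomial (Fin (n + 1)) K ≃ₐ[K] MvPolynomial (Fin (n + 1)) K}
    (hρ0 : ρ (X 0) = X 0 + C c) (hρj : ρ (X j.succ) = X j.succ) :
    ¬ CommutesWith ρ (shamsuddin a b) := by
  intro hcomm
  have h := hcomm (X j.succ)
  rw [shamsuddin_apply_X_succ, map_add, map_mul, ← Polynomial.aeval_algHom_apply,
    ← Polynomial.aeval_algHom_apply, hρ0, hρj, shamsuddin_apply_X_succ, aeval_X_add_C,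
    aeval_X_add_C] at h
  have hpderiv := pderiv_aeval_X_of_ne (K := K) (Fin.succ_ne_zero j).symm
  obtain ⟨ha, hb⟩ := eq_and_eq_of_mul_X_add_eq (hpderiv _) (hpderiv _) (hpderiv _) (hpderiv _) h
  have ha' := Polynomial.eq_C_of_comp_X_add_C_eq_self hc (aeval_X_injective 0 ha)
  have hb' := Polynomial.eq_C_of_comp_X_add_C_eq_self hc (aeval_X_injective 0 hb)
  set l := (a j).eval 0
  set m := (b j).eval 0
  have hl : l ≠ 0 := fun hl =>
    hs.shamsuddin_linearCoeff_ne_zero j (by rw [ha', hl, Polynomial.C_0])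
  refine hs.apply_X_sub_ne_mul (i := j.succ) (degreeOf_C (-(m / l)) _) (C l) ?_
  have hlm : C l * C (-(m / l)) = (-C m : MvPolynomial (Fin (n + 1)) K) := by
    rw [← C_mul, ← C_neg, mul_neg, mul_div_cancel₀ _ hl]
  rw [map_sub, shamsuddin_apply_X_succ, ha', hb', Polynomial.aeval_C, Polynomial.aeval_C,
    algebraMap_eq, derivation_C]
  linear_combination hlm

theorem IsSimpleDerivation.shamsuddin_eq_one_of_isElementary [CharZero K]
    (hs : IsSimpleDerivation (shamsuddin a b)) (hn : 1 ≤ n)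
    {ρ : MvPolynomial (Fin (n + 1)) K ≃ₐ[K] MvPolynomial (Fin (n + 1)) K}
    (hρ : IsElementary ρ) (hcomm : CommutesWith ρ (shamsuddin a b)) : ρ = 1 := by
  obtain ⟨i, α, f, -, hf, hρi, hfix⟩ := hρ
  suffices ρ (X i) = X i + C 0 from
    algEquiv_eq_one_of_apply_X fun t => by
      rcases eq_or_ne t i with rfl | ht
      · simpa using this
      · exact hfix t ht
  rcases Fin.eq_zero_or_eq_succ i with rfl | ⟨k, rfl⟩
  · obtain ⟨c, hc, -⟩ := hs.exists_apply_X_eq_X_add_C_of_commutes hcomm hf hρi (u := 0) (v := 1)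
      (by rw [shamsuddin_apply_X_zero, zero_mul, zero_add]) (map_zero ρ) (map_one ρ)
    obtain rfl : c = 0 := by
      by_contra h
      exact hs.shamsuddin_not_commutes_translation ⟨0, hn⟩ h hc (hfix _ (Fin.succ_ne_zero _))
        hcomm
    exact hc
  · have hfixX0 (p : Polynomial K) : ρ (Polynomial.aeval (X 0) p) = Polynomial.aeval (X 0) p := by
      rw [← Polynomial.aeval_algHom_apply, hfix 0 (Fin.succ_ne_zero k).symm]
    obtain ⟨c, hc, hac⟩ := hs.exists_apply_X_eq_X_add_C_of_commutes hcomm hf hρi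
      (shamsuddin_apply_X_succ k) (hfixX0 _) (hfixX0 _)
    have hak : Polynomial.aeval (X 0 : MvPolynomial (Fin (n + 1)) K) (a k) ≠ 0 :=
      (map_ne_zero_iff _ (aeval_X_injective 0)).mpr (hs.shamsuddin_linearCoeff_ne_zero k)
    rwa [(C_eq_zero.mp ((mul_eq_zero.mp hac).resolve_left hak) : c = 0)] at hc

end Shamsuddin

theorem stmt_16_general {K : Type*} [Field K] [CharZero K]
    (n : ℕ) (hn : 1 ≤ n) (a b : Fin n → Polynomial K)
    (D : Derivation K (MvPolynomial (Fin (n + 1)) K) (MvPolynomial (Fin (n + 1)) K))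
    (hD : D = pderiv (0 : Fin (n + 1)) + ∑ i : Fin n,
      (Polynomial.aeval (X 0 : MvPolynomial (Fin (n + 1)) K) (a i) * X i.succ
        + Polynomial.aeval (X 0 : MvPolynomial (Fin (n + 1)) K) (b i)) • pderiv i.succ)
    (hsimple : IsSimpleDerivation D) :
    tameIsotropy D = ⊥ ∧
    ∀ ρ : MvPolynomial (Fin (n + 1)) K ≃ₐ[K] MvPolynomial (Fin (n + 1)) K,
      IsElementary ρ → CommutesWith ρ D → ρ = 1 := by
  obtain rfl : D = shamsuddin a b := hD
  refine ⟨Subgroup.closure_eq_bot_iff.mpr fun ρ hρ => ?_, fun ρ => ?_⟩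
  · exact hsimple.shamsuddin_eq_one_of_isElementary hn hρ.1 hρ.2
  · exact hsimple.shamsuddin_eq_one_of_isElementary hn

/-- If the Shamsuddin derivation `D = ∂/∂X + Σ (a_i(X)·Y_i + b_i(X))·∂/∂Y_i` of
`K[X,Y_1,…,Y_n]`, `n ≥ 1`, is simple, then `Tame_D = {id}`: the only elementary automorphism
commuting with `D` is the identity. -/
theorem stmt_16 {K : Type*} [Field K] [CharZero K] [IsAlgClosed K]
    (n : ℕ) (hn : 1 ≤ n) (a b : Fin n → Polynomial K)
    (D : Derivation K (MvPolynomial (Fin (n + 1)) K) (MvPolynomial (Fin (n + 1)) K))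
    (hD : D = pderiv (0 : Fin (n + 1)) + ∑ i : Fin n,
      (Polynomial.aeval (X 0 : MvPolynomial (Fin (n + 1)) K) (a i) * X i.succ
        + Polynomial.aeval (X 0 : MvPolynomial (Fin (n + 1)) K) (b i)) • pderiv i.succ)
    (hsimple : IsSimpleDerivation D) :
    tameIsotropy D = ⊥ ∧
    ∀ ρ : MvPolynomial (Fin (n + 1)) K ≃ₐ[K] MvPolynomial (Fin (n + 1)) K,
      IsElementary ρ → CommutesWith ρ D → ρ = 1 :=
  stmt_16_general n hn a b D hD hsimple
end

section
/- Let D = −Y·∂/∂X + X·∂/∂Y be the K-derivation of K[X,Y]. Then the only elementary automorphism of K[X,Y] commuting with D is the identity; i.e., Tame_D(K[X,Y]) = {id}. -/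
open MvPolynomial

lemma key_aux {K : Type*} [CommRing K] {n : ℕ} (i : Fin n) (a : K)
    (f : MvPolynomial (Fin n) K) (hf : degreeOf i f = 0)
    (h : C a * X i + f = X i) : a = 1 ∧ f = 0 := by
  have hc : coeff (Finsupp.single i 1) f = 0 := by
    by_contra h0
    have := monomial_le_degreeOf i (mem_support_iff.mpr h0)
    simp [hf] at this
  have ha : a = 1 := by
    have := congrArg (coeff (Finsupp.single i 1)) h
    simpa [coeff_add, coeff_C_mul, coeff_X, hc] using this
  subst ha
  refine ⟨rfl, ?_⟩
  have : f = X i - C 1 * X i := eq_sub_of_add_eq' h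
  simpa using this

lemma eq_one_of_fixes {K : Type*} [CommRing K] {n : ℕ}
    (ρ : MvPolynomial (Fin n) K ≃ₐ[K] MvPolynomial (Fin n) K)
    (h : ∀ j : Fin n, ρ (X j) = X j) : ρ = 1 := by
  have h2 : (ρ : MvPolynomial (Fin n) K →ₐ[K] MvPolynomial (Fin n) K)
      = AlgHom.id K _ := algHom_ext fun j => h j
  exact AlgEquiv.ext fun p => DFunLike.congr_fun h2 p

/-- For the derivation `D = −Y·∂/∂X + X·∂/∂Y` of `K[X,Y]`, the only elementary automorphism
commuting with `D` is the identity, i.e. `Tame_D(K[X,Y]) = {id}`. -/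
theorem stmt_18 {K : Type*} [Field K] [CharZero K] [IsAlgClosed K]
    (D : Derivation K (MvPolynomial (Fin 2) K) (MvPolynomial (Fin 2) K))
    (hD : D = (-(X 1) : MvPolynomial (Fin 2) K) • pderiv (0 : Fin 2)
        + (X 0 : MvPolynomial (Fin 2) K) • pderiv (1 : Fin 2)) :
    (∀ ρ : MvPolynomial (Fin 2) K ≃ₐ[K] MvPolynomial (Fin 2) K,
      IsElementary ρ → CommutesWith ρ D → ρ = 1) ∧
    tameIsotropy D = ⊥ := by
  have hD1 : D (X 1) = X 0 := by subst hD; simp [pderiv_X, Pi.single_apply]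
  have hD0 : D (X 0) = -(X 1) := by subst hD; simp [pderiv_X, Pi.single_apply]
  have main : ∀ ρ : MvPolynomial (Fin 2) K ≃ₐ[K] MvPolynomial (Fin 2) K,
      IsElementary ρ → CommutesWith ρ D → ρ = 1 := by
    rintro ρ ⟨i, a, f, -, hdeg, hXi, hfix⟩ hcomm
    have hi : i = 0 ∨ i = 1 := by
      rcases i with ⟨_ | _ | _, h⟩
      · exact Or.inl rfl
      · exact Or.inr rfl
      · omega
    rcases hi with rfl | rfl
    · -- i = 0
      have h1 : ρ (X 1) = X 1 := hfix 1 (by decide)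
      have hc := hcomm (X 1)
      rw [hD1, h1, hD1] at hc
      rw [hXi] at hc
      obtain ⟨ha, hf⟩ := key_aux 0 a f hdeg hc
      apply eq_one_of_fixes
      intro j
      fin_cases j
      · show ρ (X 0) = X 0
        rw [hXi, ha, hf]; simp
      · exact h1
    · -- i = 1
      have h0 : ρ (X 0) = X 0 := hfix 0 (by decide)
      have hc := hcomm (X 0)
      rw [hD0, h0, hD0, map_neg, hXi, neg_inj] at hc
      obtain ⟨ha, hf⟩ := key_aux 1 a f hdeg hc
      apply eq_one_of_fixes
      intro j
      fin_cases j
      · exact h0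
      · show ρ (X 1) = X 1
        rw [hXi, ha, hf]; simp
  refine ⟨main, ?_⟩
  rw [tameIsotropy, Subgroup.closure_eq_bot_iff]
  rintro ρ ⟨h1, h2⟩
  exact main ρ h1 h2
end

section
/- Let D = −Y·∂/∂X + X·∂/∂Y be the K-derivation of K[X,Y]. Then D is not simple (the principal ideal generated by X² + Y² is D-stable, since D(X² + Y²) = 0), and the K-algebra automorphism ρ of K[X,Y] defined by ρ(X) = X − Y and ρ(Y) = X + Y satisfies ρ∘D = D∘ρ and ρ ≠ id; in particular Aut_D(K[X,Y]) strictly contains Tame_D(K[X,Y]) = {id}. -/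
open MvPolynomial

noncomputable def rho (K : Type*) [Field K] [CharZero K] :
    MvPolynomial (Fin 2) K ≃ₐ[K] MvPolynomial (Fin 2) K :=
  AlgEquiv.ofAlgHom
    (aeval ![X 0 - X 1, X 0 + X 1])
    (aeval ![C (2⁻¹ : K) * (X 0 + X 1), C (2⁻¹ : K) * (X 1 - X 0)])
    (by
      apply MvPolynomial.algHom_ext
      intro i
      fin_cases i <;>
      · simp
        ring_nf
        rw [mul_right_comm, show ((2:MvPolynomial (Fin 2) K)) = C (2:K) from (map_ofNat C 2).symm,
          ← C_mul]
        norm_num)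
    (by
      apply MvPolynomial.algHom_ext
      intro i
      fin_cases i <;>
      · simp
        ring_nf
        rw [mul_right_comm, show ((2:MvPolynomial (Fin 2) K)) = C (2:K) from (map_ofNat C 2).symm,
          ← C_mul]
        norm_num)

lemma rho_X0 {K : Type*} [Field K] [CharZero K] : (rho K) (X 0) = X 0 - X 1 := by simp [rho]
lemma rho_X1 {K : Type*} [Field K] [CharZero K] : (rho K) (X 1) = X 0 + X 1 := by simp [rho]

/-- For the derivation `D = −Y·∂/∂X + X·∂/∂Y` of `K[X,Y]`: `D` is not simple (indeed
`D(X² + Y²) = 0`, so the principal ideal `⟨X² + Y²⟩` is `D`-stable), and the automorphism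
`ρ` with `ρ(X) = X − Y`, `ρ(Y) = X + Y` commutes with `D` and `ρ ≠ id`; in particular
`Aut_D(K[X,Y])` strictly contains `Tame_D(K[X,Y]) = {id}`. -/
theorem stmt_19 {K : Type*} [Field K] [CharZero K] [IsAlgClosed K]
    (D : Derivation K (MvPolynomial (Fin 2) K) (MvPolynomial (Fin 2) K))
    (hD : D = (-(X 1) : MvPolynomial (Fin 2) K) • pderiv (0 : Fin 2)
        + (X 0 : MvPolynomial (Fin 2) K) • pderiv (1 : Fin 2)) :
    ¬ IsSimpleDerivation D ∧
    D ((X 0 : MvPolynomial (Fin 2) K) ^ 2 + X 1 ^ 2) = 0 ∧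
    (∀ x ∈ Ideal.span {(X 0 : MvPolynomial (Fin 2) K) ^ 2 + X 1 ^ 2},
      D x ∈ Ideal.span {(X 0 : MvPolynomial (Fin 2) K) ^ 2 + X 1 ^ 2}) ∧
    (∃ ρ : MvPolynomial (Fin 2) K ≃ₐ[K] MvPolynomial (Fin 2) K,
      ρ (X 0) = X 0 - X 1 ∧ ρ (X 1) = X 0 + X 1 ∧ CommutesWith ρ D ∧ ρ ≠ 1) ∧
    tameIsotropy D = ⊥ ∧
    tameIsotropy D < Subgroup.closure
      {ρ : MvPolynomial (Fin 2) K ≃ₐ[K] MvPolynomial (Fin 2) K | CommutesWith ρ D} := by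
  have hX0 : D (X 0) = -(X 1) := by
    rw [hD]; simp [Derivation.smul_apply, pderiv_X, Pi.single_apply]
  have hX1 : D (X 1) = X 0 := by
    rw [hD]; simp [Derivation.smul_apply, pderiv_X, Pi.single_apply]
  have hDp : D ((X 0 : MvPolynomial (Fin 2) K) ^ 2 + X 1 ^ 2) = 0 := by
    rw [hD]; simp [Derivation.smul_apply]; ring
  -- stability
  have hstab : ∀ x ∈ Ideal.span {(X 0 : MvPolynomial (Fin 2) K) ^ 2 + X 1 ^ 2},
      D x ∈ Ideal.span {(X 0 : MvPolynomial (Fin 2) K) ^ 2 + X 1 ^ 2} := by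
    intro x hx
    rw [Ideal.mem_span_singleton] at hx ⊢
    obtain ⟨q, rfl⟩ := hx
    rw [Derivation.leibniz, hDp]
    simp only [smul_eq_mul, mul_zero, zero_add, smul_zero, add_zero]
    exact Dvd.intro _ rfl
  have hpne : ((X 0 : MvPolynomial (Fin 2) K) ^ 2 + X 1 ^ 2) ≠ 0 := by
    intro h
    have := congrArg (MvPolynomial.eval (![1,0] : Fin 2 → K)) h
    simp at this
  have hpnu : ¬ IsUnit ((X 0 : MvPolynomial (Fin 2) K) ^ 2 + X 1 ^ 2) := by
    intro h
    obtain ⟨i, hi⟩ := IsAlgClosed.exists_pow_nat_eq (-1 : K) (n := 2) (by norm_num)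
    have h2 := h.map (MvPolynomial.eval (![i,1] : Fin 2 → K))
    simp [hi] at h2
  have hnsimple : ¬ IsSimpleDerivation D := by
    intro h
    rcases h (Ideal.span {(X 0 : MvPolynomial (Fin 2) K) ^ 2 + X 1 ^ 2}) hstab with h' | h'
    · exact hpne (by simpa [Ideal.span_singleton_eq_bot] using h')
    · exact hpnu (by rwa [Ideal.span_singleton_eq_top] at h')
  -- rho commutes with D
  have hgen : ∀ i : Fin 2, (rho K) (D (X i)) = D ((rho K) (X i)) := by
    intro i
    fin_cases i
    · show (rho K) (D (X 0)) = D ((rho K) (X 0))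
      rw [hX0, map_neg, rho_X1, rho_X0, map_sub, hX0, hX1]; ring
    · show (rho K) (D (X 1)) = D ((rho K) (X 1))
      rw [hX1, rho_X0, rho_X1, map_add, hX0, hX1]; ring
  have hcomm : CommutesWith (rho K) D := by
    intro q
    induction q using MvPolynomial.induction_on with
    | C a =>
        rw [show (C a : MvPolynomial (Fin 2) K) = algebraMap K _ a from rfl,
          AlgEquiv.commutes]
        simp
    | add q r hq hr => simp only [map_add, hq, hr]
    | mul_X q i hq =>
        rw [Derivation.leibniz, map_add, smul_eq_mul, smul_eq_mul, map_mul, map_mul, hq, hgen,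
          map_mul, Derivation.leibniz, smul_eq_mul, smul_eq_mul]
  have hrhone : (rho K) ≠ 1 := by
    intro h
    have h0 : (X 0 : MvPolynomial (Fin 2) K) - X 1 = X 0 := by
      rw [← rho_X0 (K := K), h]; rfl
    have : (X 1 : MvPolynomial (Fin 2) K) = 0 := by
      have := sub_eq_self.mp h0
      exact this
    exact X_ne_zero 1 this
  -- tame isotropy is trivial
  have htame : tameIsotropy D = ⊥ := by
    rw [tameIsotropy, eq_bot_iff, Subgroup.closure_le]
    · intro σ hσ
      obtain ⟨⟨i, a, f, ha, hf, hXi, hfix⟩, hc⟩ := hσ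
      have hfixes : σ (X 0) = X 0 ∧ σ (X 1) = X 1 := by
        fin_cases i
        · have h1 : σ (X 1) = X 1 := hfix 1 (by decide)
          have h0 : σ (X 0) = X 0 := by
            calc σ (X 0) = σ (D (X 1)) := by rw [hX1]
            _ = D (σ (X 1)) := hc _
            _ = X 0 := by rw [h1, hX1]
          exact ⟨h0, h1⟩
        · have h0 : σ (X 0) = X 0 := hfix 0 (by decide)
          have h1 : σ (X 1) = X 1 := by
            have : σ (D (X 0)) = D (σ (X 0)) := hc _
            rw [h0, hX0, map_neg] at this
            exact neg_injective this
          exact ⟨h0, h1⟩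
      rw [SetLike.mem_coe, Subgroup.mem_bot]
      have heq : (σ : MvPolynomial (Fin 2) K →ₐ[K] MvPolynomial (Fin 2) K)
          = AlgHom.id K _ := by
        apply MvPolynomial.algHom_ext
        intro j
        fin_cases j <;> simp [hfixes.1, hfixes.2]
      apply AlgEquiv.ext
      intro q
      have := DFunLike.congr_fun heq q
      simpa using this
  refine ⟨hnsimple, hDp, hstab, ⟨rho K, rho_X0, rho_X1, hcomm, hrhone⟩, htame, ?_⟩
  rw [htame, bot_lt_iff_ne_bot]
  intro h
  have hmem : rho K ∈ Subgroup.closure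
      {ρ : MvPolynomial (Fin 2) K ≃ₐ[K] MvPolynomial (Fin 2) K | CommutesWith ρ D} :=
    Subgroup.subset_closure hcomm
  rw [h, Subgroup.mem_bot] at hmem
  exact hrhone hmem
end
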